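/- arXiv:1603.04834 — 2 statements merged into one kernel-verified Lean document; each statement's English description precedes it below -/
import Mathlib

section
/- Let R ≥ 1, let D ∈ ℂ^{R×R} be Hermitian positive definite, let Rm and Q ∈ ℂ^{R×R} be Hermitian positive semidefinite, and let ζ > 0 and σ_D² > 0 be real. Set B := D^{-1/2} (Rm − ζ Q) D^{-1/2}, where D^{-1/2} is the inverse of the positive definite square root of D, and assume λ_max(B) > 0. Then the optimal value of the second-stage beamforming problem sup { (w^H D w)^{-1} : w ∈ ℂ^R, w^H Rm w ≥ ζ (σ_D² + w^H Q w) } equals λ_max(B) / (ζ σ_D²). -/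
open Matrix
open scoped ComplexOrder

/-- The largest real eigenvalue of a complex matrix (for Hermitian matrices this is
the largest eigenvalue `λ_max`). -/
noncomputable def lambdaMax {R : ℕ} (A : Matrix (Fin R) (Fin R) ℂ) : ℝ :=
  sSup {x : ℝ | ∃ v : Fin R → ℂ, v ≠ 0 ∧ A.mulVec v = (x : ℂ) • v}

/-- The square root of a positive semidefinite matrix, as `Matrix.PosSemidef.sqrt` was
defined in the older Mathlib (removed since). -/
noncomputable def Matrix.PosSemidef.sqrt {n 𝕜 : Type*} [Fintype n] [RCLike 𝕜] [DecidableEq n]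
    {A : Matrix n n 𝕜} (hA : A.PosSemidef) : Matrix n n 𝕜 :=
  hA.1.eigenvectorUnitary.1 * diagonal ((↑) ∘ (√·) ∘ hA.1.eigenvalues) *
    (star hA.1.eigenvectorUnitary : Matrix n n 𝕜)

/-!
Substituting `u = D^{1/2} w` turns the constraint into `u^H B u ≥ ζ σ_D²` and the objective
into `(u^H u)⁻¹`. The Rayleigh bound `u^H B u ≤ λ_max(B) u^H u` then gives
`(u^H u)⁻¹ ≤ λ_max(B) / (ζ σ_D²)`, and a top eigenvector of `B`, scaled so that
`u^H B u = ζ σ_D²`, attains it.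
-/

namespace Matrix.PosSemidef

variable {n 𝕜 : Type*} [Fintype n] [RCLike 𝕜] [DecidableEq n] {A : Matrix n n 𝕜}

theorem sqrt_eq_cfc (hA : A.PosSemidef) : hA.sqrt = cfc Real.sqrt A := by
  rw [hA.1.cfc_eq, IsHermitian.cfc, Unitary.conjStarAlgAut_apply, Matrix.PosSemidef.sqrt]

theorem isHermitian_sqrt (hA : A.PosSemidef) : hA.sqrt.IsHermitian := by
  rw [sqrt_eq_cfc]
  exact cfc_predicate Real.sqrt A

theorem sqrt_mul_self (hA : A.PosSemidef) : hA.sqrt * hA.sqrt = A := by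
  rw [sqrt_eq_cfc, ← cfc_mul Real.sqrt Real.sqrt A]
  conv_rhs => rw [← cfc_id' ℝ A hA.1]
  refine cfc_congr fun x hx => ?_
  obtain ⟨i, rfl⟩ := hA.1.spectrum_real_eq_range_eigenvalues ▸ hx
  exact Real.mul_self_sqrt (hA.eigenvalues_nonneg i)

end Matrix.PosSemidef

theorem Matrix.setOf_mulVec_eq_smul_eq_spectrum {n : Type*} [Fintype n] [DecidableEq n]
    (A : Matrix n n ℂ) :
    {x : ℝ | ∃ v : n → ℂ, v ≠ 0 ∧ A *ᵥ v = (x : ℂ) • v} = spectrum ℝ A := by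
  ext x
  rw [Set.mem_ofPred_eq, ← spectrum.algebraMap_mem_iff ℂ, ← spectrum_toLin',
    ← Module.End.hasEigenvalue_iff_mem_spectrum]
  constructor
  · rintro ⟨v, hv, h⟩
    exact Module.End.hasEigenvalue_of_hasEigenvector
      ⟨Module.End.mem_eigenspace_iff.mpr (by simpa using h), hv⟩
  · intro h
    obtain ⟨v, hv⟩ := h.exists_hasEigenvector
    exact ⟨v, hv.2, by simpa using hv.apply_eq_smul⟩

variable {R : ℕ}

theorem lambdaMax_eq_sSup_spectrum (A : Matrix (Fin R) (Fin R) ℂ) :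
    lambdaMax A = sSup (spectrum ℝ A) := by
  rw [lambdaMax, setOf_mulVec_eq_smul_eq_spectrum]

theorem le_lambdaMax_of_mem_spectrum {A : Matrix (Fin R) (Fin R) ℂ} {x : ℝ}
    (hx : x ∈ spectrum ℝ A) : x ≤ lambdaMax A := by
  rw [lambdaMax_eq_sSup_spectrum]
  exact le_csSup A.finite_real_spectrum.bddAbove hx

theorem lambdaMax_mem_spectrum {A : Matrix (Fin R) (Fin R) ℂ} (h : lambdaMax A ≠ 0) :
    lambdaMax A ∈ spectrum ℝ A := by
  rw [lambdaMax_eq_sSup_spectrum] at h ⊢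
  have hne : (spectrum ℝ A).Nonempty :=
    Set.nonempty_iff_ne_empty.mpr fun hempty => h (by rw [hempty, Real.sSup_empty])
  exact hne.csSup_mem A.finite_real_spectrum

open scoped MatrixOrder in
theorem Matrix.IsHermitian.re_dotProduct_mulVec_le {A : Matrix (Fin R) (Fin R) ℂ}
    (hA : A.IsHermitian) (u : Fin R → ℂ) :
    (star u ⬝ᵥ A *ᵥ u).re ≤ lambdaMax A * (star u ⬝ᵥ u).re := by
  have hle : A ≤ algebraMap ℝ _ (lambdaMax A) :=
    le_algebraMap_of_spectrum_le (fun x hx => le_lambdaMax_of_mem_spectrum hx) hA.isSelfAdjoint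
  have hpos := (Complex.nonneg_iff.mp ((Matrix.le_iff.mp hle).dotProduct_mulVec_nonneg u)).1
  rw [Algebra.algebraMap_eq_smul_one, sub_mulVec, dotProduct_sub, smul_mulVec, one_mulVec] at hpos
  simpa [Complex.sub_re, Complex.real_smul] using hpos

theorem exists_re_dotProduct_mulVec_eq {A : Matrix (Fin R) (Fin R) ℂ} (hpos : 0 < lambdaMax A)
    {c : ℝ} (hc : 0 < c) :
    ∃ u : Fin R → ℂ, (star u ⬝ᵥ A *ᵥ u).re = c ∧ (star u ⬝ᵥ u).re = c / lambdaMax A := by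
  obtain ⟨v, hv, hAv⟩ :=
    (setOf_mulVec_eq_smul_eq_spectrum A).symm ▸ lambdaMax_mem_spectrum hpos.ne'
  set t := (star v ⬝ᵥ v).re
  obtain ⟨ht, hvv_im⟩ := Complex.pos_iff.mp (dotProduct_star_self_pos_iff.mpr hv)
  have hvv : star v ⬝ᵥ v = (t : ℂ) := Complex.ext rfl (by simpa using hvv_im.symm)
  set s := √(c / (lambdaMax A * t))
  have hs : s ^ 2 * (lambdaMax A * t) = c := by
    rw [Real.sq_sqrt (by positivity), div_mul_cancel₀ _ (by positivity)]
  refine ⟨(s : ℂ) • v, ?_, ?_⟩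
  · rw [mulVec_smul, hAv, star_smul, smul_dotProduct, dotProduct_smul, dotProduct_smul, hvv]
    simp only [smul_eq_mul, Complex.star_def, Complex.conj_ofReal, ← Complex.ofReal_mul,
      Complex.ofReal_re]
    linear_combination hs
  · rw [star_smul, smul_dotProduct, dotProduct_smul, hvv, eq_div_iff hpos.ne']
    simp only [smul_eq_mul, Complex.star_def, Complex.conj_ofReal, ← Complex.ofReal_mul,
      Complex.ofReal_re]
    linear_combination hs

theorem Matrix.IsHermitian.isGreatest_inv_re_dotProduct_self {A : Matrix (Fin R) (Fin R) ℂ}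
    (hA : A.IsHermitian) (hpos : 0 < lambdaMax A) {c : ℝ} (hc : 0 < c) :
    IsGreatest {v : ℝ | ∃ u : Fin R → ℂ, c ≤ (star u ⬝ᵥ A *ᵥ u).re ∧ v = (star u ⬝ᵥ u).re⁻¹}
      (lambdaMax A / c) := by
  refine ⟨?_, ?_⟩
  · obtain ⟨u, hAu, hu⟩ := exists_re_dotProduct_mulVec_eq hpos hc
    exact ⟨u, hAu.ge, by rw [hu, inv_div]⟩
  · rintro _ ⟨u, hcu, rfl⟩
    have hle : c ≤ lambdaMax A * (star u ⬝ᵥ u).re := hcu.trans (hA.re_dotProduct_mulVec_le u)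
    have ht : 0 < (star u ⬝ᵥ u).re := pos_of_mul_pos_right (hc.trans_le hle) hpos.le
    rwa [le_div_iff₀ hc, inv_mul_le_iff₀ ht, mul_comm]

theorem Matrix.star_mulVec_dotProduct_mulVec_mulVec {n α : Type*} [Fintype n] [CommSemiring α]
    [StarRing α] (S M : Matrix n n α) (w : n → α) :
    star (S *ᵥ w) ⬝ᵥ M *ᵥ (S *ᵥ w) = star w ⬝ᵥ (Sᴴ * M * S) *ᵥ w := by
  rw [star_mulVec, ← dotProduct_mulVec, mulVec_mulVec, mulVec_mulVec, Matrix.mul_assoc]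

theorem setOf_inv_re_dotProduct_eq_of_conjTranspose_mul_mul {n : Type*} [Fintype n]
    [DecidableEq n] {S D M B : Matrix n n ℂ} (hS : IsUnit S) (hD : Sᴴ * S = D)
    (hB : Sᴴ * B * S = M) (c : ℝ) :
    {v : ℝ | ∃ w : n → ℂ, c ≤ (star w ⬝ᵥ M *ᵥ w).re ∧ v = (star w ⬝ᵥ D *ᵥ w).re⁻¹} =
      {v : ℝ | ∃ u : n → ℂ, c ≤ (star u ⬝ᵥ B *ᵥ u).re ∧ v = (star u ⬝ᵥ u).re⁻¹} := by
  ext v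
  rw [Set.mem_ofPred_eq, Set.mem_ofPred_eq]
  conv_rhs => rw [(mulVec_surjective_iff_isUnit.mpr hS).exists]
  refine exists_congr fun w => ?_
  have hnorm : star (S *ᵥ w) ⬝ᵥ S *ᵥ w = star w ⬝ᵥ D *ᵥ w := by
    simpa [hD] using star_mulVec_dotProduct_mulVec_mulVec S 1 w
  rw [star_mulVec_dotProduct_mulVec_mulVec, hB, hnorm]

theorem stmt0_general {R : ℕ}
    (D Rm Q : Matrix (Fin R) (Fin R) ℂ)
    (hD : D.PosDef) (hRm : Rm.PosSemidef) (hQ : Q.PosSemidef)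
    (ζ σD2 : ℝ) (hζ : 0 < ζ) (hσ : 0 < σD2)
    (B : Matrix (Fin R) (Fin R) ℂ)
    (hB : B = (Matrix.PosSemidef.sqrt hD.posSemidef)⁻¹ * (Rm - (ζ : ℂ) • Q) * (Matrix.PosSemidef.sqrt hD.posSemidef)⁻¹)
    (hlam : 0 < lambdaMax B) :
    sSup {v : ℝ | ∃ w : Fin R → ℂ,
        ζ * (σD2 + (star w ⬝ᵥ Q.mulVec w).re) ≤ (star w ⬝ᵥ Rm.mulVec w).re ∧
        v = ((star w ⬝ᵥ D.mulVec w).re)⁻¹} = lambdaMax B / (ζ * σD2) := by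
  set S := hD.posSemidef.sqrt
  have hS : Sᴴ = S := hD.posSemidef.isHermitian_sqrt
  have hSS : S * S = D := hD.posSemidef.sqrt_mul_self
  have hSunit : IsUnit S := isUnit_of_mul_isUnit_right (hSS ▸ hD.isUnit)
  have hM : (Rm - (ζ : ℂ) • Q).IsHermitian := hRm.1.sub (hQ.1.smul (Complex.conj_ofReal ζ))
  have hBH : B.IsHermitian := by
    rw [hB]
    simpa [conjTranspose_nonsing_inv, hS] using isHermitian_mul_mul_conjTranspose S⁻¹ hM
  have hSBS : Sᴴ * B * S = Rm - (ζ : ℂ) • Q := by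
    rw [hS, hB]
    have hdet : IsUnit S.det := (isUnit_iff_isUnit_det S).mp hSunit
    simp [Matrix.mul_assoc, nonsing_inv_mul _ hdet, mul_nonsing_inv_cancel_left _ _ hdet]
  have hfeasible : ∀ w : Fin R → ℂ,
      ζ * (σD2 + (star w ⬝ᵥ Q *ᵥ w).re) ≤ (star w ⬝ᵥ Rm *ᵥ w).re ↔
        ζ * σD2 ≤ (star w ⬝ᵥ (Rm - (ζ : ℂ) • Q) *ᵥ w).re := fun w => by
    rw [sub_mulVec, dotProduct_sub, Complex.sub_re, smul_mulVec, dotProduct_smul, smul_eq_mul,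
      Complex.re_ofReal_mul, mul_add, le_sub_iff_add_le]
  simp_rw [hfeasible]
  rw [setOf_inv_re_dotProduct_eq_of_conjTranspose_mul_mul hSunit (by rw [hS, hSS]) hSBS]
  exact (hBH.isGreatest_inv_re_dotProduct_self hlam (mul_pos hζ hσ)).csSup_eq

theorem stmt0 {R : ℕ} (hR : 1 ≤ R)
    (D Rm Q : Matrix (Fin R) (Fin R) ℂ)
    (hD : D.PosDef) (hRm : Rm.PosSemidef) (hQ : Q.PosSemidef)
    (ζ σD2 : ℝ) (hζ : 0 < ζ) (hσ : 0 < σD2)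
    (B : Matrix (Fin R) (Fin R) ℂ)
    (hB : B = (Matrix.PosSemidef.sqrt hD.posSemidef)⁻¹ * (Rm - (ζ : ℂ) • Q) * (Matrix.PosSemidef.sqrt hD.posSemidef)⁻¹)
    (hlam : 0 < lambdaMax B) :
    sSup {v : ℝ | ∃ w : Fin R → ℂ,
        ζ * (σD2 + (star w ⬝ᵥ Q.mulVec w).re) ≤ (star w ⬝ᵥ Rm.mulVec w).re ∧
        v = ((star w ⬝ᵥ D.mulVec w).re)⁻¹} = lambdaMax B / (ζ * σD2) :=
  stmt0_general D Rm Q hD hRm hQ ζ σD2 hζ hσ B hB hlam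
end

section
/- Fundamental lemma of stochastic control, finite-action version (used to pass from the first-stage problem (10) to the pointwise problem (12)): let (Ω, F, P) be a probability space, let E be a measurable space, let X : Ω → E be measurable, let A be a nonempty finite set, and for each a ∈ A let φ_a : Ω → ℝ be integrable. Then sup { E[ φ_{g(X)} ] : g : E → A measurable } = E[ max_{a ∈ A} E[ φ_a | σ(X) ] ], where E[ φ_{g(X)} ] denotes the integral of ω ↦ φ_{g(X(ω))}(ω); moreover the supremum over measurable policies g is attained. -/
/-!
Write `ψ a = E[φ a | σ(X)]`. For a policy `g`, the action `g (X ω)` is `σ(X)`-measurable and takes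
finitely many values, so splitting `Ω` along its level sets gives `E[φ_{g(X)}] = E[ψ_{g(X)}]`,
which is at most `E[max_a ψ a]`. Equality holds for a policy picking an argmax: by Doob–Dynkin
`ψ a = f a ∘ X` with `f a` measurable on `E`, and a maximiser of the finitely many `f a e` can be
chosen measurably in `e`.
-/

open MeasureTheory ProbabilityTheory

theorem exists_measurable_argmax_sup' {α A β : Type*} [MeasurableSpace α] [MeasurableSpace A]
    [LinearOrder β] [TopologicalSpace β] [OrderClosedTopology β] [SecondCountableTopology β]
    [MeasurableSpace β] [BorelSpace β] {s : Finset A} (hs : s.Nonempty) {f : A → α → β}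
    (hf : ∀ a, Measurable (f a)) :
    ∃ g : α → A, Measurable g ∧ ∀ x, f (g x) x = s.sup' hs (f · x) := by
  induction hs using Finset.Nonempty.cons_induction with
  | singleton a => exact ⟨fun _ => a, measurable_const, fun x => by simp⟩
  | cons a s _ hs ih =>
    obtain ⟨g, hg, hg_max⟩ := ih
    have hsup : Measurable fun x => s.sup' hs (f · x) := by
      convert Finset.measurable_sup' hs fun b _ => hf b using 1
      exact funext fun x => (Finset.sup'_apply hs f x).symm
    refine ⟨fun x => if s.sup' hs (f · x) ≤ f a x then a else g x,
      Measurable.ite (measurableSet_le hsup (hf a)) measurable_const hg, fun x => ?_⟩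
    dsimp only
    rw [Finset.sup'_cons hs]
    split_ifs with h
    · exact (sup_eq_left.mpr h).symm
    · rw [hg_max, sup_eq_right.mpr (not_le.mp h).le]

section Fibers

variable {Ω A : Type*} [Fintype A]

theorem apply_eq_sum_indicator_fiber {β : Type*} [AddCommMonoid β] (τ : Ω → A)
    (h : A → Ω → β) :
    (fun ω => h (τ ω) ω) = fun ω => ∑ a, (τ ⁻¹' {a}).indicator (h a) ω := by
  ext ω
  rw [Fintype.sum_eq_single (f := fun a => (τ ⁻¹' {a}).indicator (h a) ω) (τ ω)
    fun b hb => Set.indicator_of_notMem (s := τ ⁻¹' {b}) (Ne.symm hb) (h b)]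
  exact (Set.indicator_of_mem (s := τ ⁻¹' {τ ω}) rfl (h (τ ω))).symm

theorem integrable_apply_of_measurableSet_fiber [MeasurableSpace Ω] {P : Measure Ω}
    {τ : Ω → A} (hτ : ∀ a, MeasurableSet (τ ⁻¹' {a})) {h : A → Ω → ℝ}
    (hh : ∀ a, Integrable (h a) P) :
    Integrable (fun ω => h (τ ω) ω) P := by
  rw [apply_eq_sum_indicator_fiber]
  exact integrable_finsetSum _ fun a _ => (hh a).indicator (hτ a)

theorem integral_apply_eq_integral_condExp_apply {m mΩ : MeasurableSpace Ω} {P : Measure Ω}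
    (hm : m ≤ mΩ) [SigmaFinite (P.trim hm)] {τ : Ω → A} (hτ : ∀ a, MeasurableSet[m] (τ ⁻¹' {a}))
    {φ : A → Ω → ℝ} (hφ : ∀ a, Integrable (φ a) P) :
    ∫ ω, φ (τ ω) ω ∂P = ∫ ω, (P[φ (τ ω) | m]) ω ∂P := by
  have hτ' : ∀ a, MeasurableSet (τ ⁻¹' {a}) := fun a => hm _ (hτ a)
  rw [apply_eq_sum_indicator_fiber τ φ, apply_eq_sum_indicator_fiber τ fun a => P[φ a | m],
    integral_finsetSum _ fun a _ => (hφ a).indicator (hτ' a),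
    integral_finsetSum _ fun a _ => integrable_condExp.indicator (hτ' a)]
  refine Finset.sum_congr rfl fun a _ => ?_
  rw [integral_indicator (hτ' a), integral_indicator (hτ' a),
    setIntegral_condExp hm (hφ a) (hτ a)]

end Fibers

theorem exists_policy_comp_eq_sup' {Ω E A : Type*} [MeasurableSpace E] (X : Ω → E)
    {s : Finset A} (hs : s.Nonempty) {ψ : A → Ω → ℝ}
    (hψ : ∀ a, Measurable[MeasurableSpace.comap X inferInstance] (ψ a)) :
    ∃ g : E → A, (∀ a, MeasurableSet {e | g e = a}) ∧
      ∀ ω, ψ (g (X ω)) ω = s.sup' hs (ψ · ω) := by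
  choose f hf hf_comp using fun a => (hψ a).exists_eq_measurable_comp
  let _ : MeasurableSpace A := ⊤
  obtain ⟨g, hg, hg_max⟩ := exists_measurable_argmax_sup' hs hf
  refine ⟨g, fun a => hg (t := {a}) MeasurableSpace.measurableSet_top, fun ω => ?_⟩
  simp only [hf_comp, Function.comp_apply]
  exact hg_max (X ω)

theorem stmt16 {Ω : Type*} {F : MeasurableSpace Ω} (P : Measure Ω) [IsProbabilityMeasure P]
    {E : Type*} [MeasurableSpace E] (X : Ω → E) (hX : Measurable X)
    {A : Type*} [Fintype A] [Nonempty A]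
    (φ : A → Ω → ℝ) (hφ : ∀ a, Integrable (φ a) P) :
    IsGreatest
      {v : ℝ | ∃ g : E → A, (∀ a, MeasurableSet {e | g e = a}) ∧
        v = ∫ ω, φ (g (X ω)) ω ∂P}
      (∫ ω, Finset.univ.sup' Finset.univ_nonempty
        (fun a => (P[φ a | MeasurableSpace.comap X inferInstance]) ω) ∂P) := by
  have hm : MeasurableSpace.comap X inferInstance ≤ F := hX.comap_le
  have policy_fiber : ∀ g : E → A, (∀ a, MeasurableSet {e | g e = a}) →
      ∀ a, MeasurableSet[MeasurableSpace.comap X inferInstance] ((fun ω => g (X ω)) ⁻¹' {a}) :=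
    fun g hg a => ⟨_, hg a, rfl⟩
  have policy_value : ∀ g : E → A, (∀ a, MeasurableSet {e | g e = a}) →
      ∫ ω, φ (g (X ω)) ω ∂P =
        ∫ ω, (P[φ (g (X ω)) | MeasurableSpace.comap X inferInstance]) ω ∂P :=
    fun g hg => integral_apply_eq_integral_condExp_apply hm (policy_fiber g hg) hφ
  have policy_integrable : ∀ g : E → A, (∀ a, MeasurableSet {e | g e = a}) →
      Integrable (fun ω => (P[φ (g (X ω)) | MeasurableSpace.comap X inferInstance]) ω) P :=
    fun g hg => integrable_apply_of_measurableSet_fiber (fun a => hm _ (policy_fiber g hg a))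
      fun _ => integrable_condExp
  obtain ⟨g, hg, hg_max⟩ := exists_policy_comp_eq_sup' X Finset.univ_nonempty
    fun a => (stronglyMeasurable_condExp (f := φ a) (μ := P)).measurable
  refine ⟨⟨g, hg, by simp only [policy_value g hg, hg_max]⟩, ?_⟩
  rintro v ⟨g', hg', rfl⟩
  rw [policy_value g' hg']
  refine integral_mono (policy_integrable g' hg') ?_
    fun ω => Finset.le_sup' (fun a => (P[φ a | MeasurableSpace.comap X inferInstance]) ω)
      (Finset.mem_univ _)
  simpa only [hg_max] using policy_integrable g hg
end
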